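/- arXiv:2403.11244 — 2 statements merged into one kernel-verified Lean document; each statement's English description precedes it below -/
import Mathlib

section
/- Let C_{K,n} = (K/(n+K))·binom(2n+K-1, n) for n ≥ 0 and C_{K,n} = 0 for n < 0, and define D_{K,M}(N) = det((C_{K,i+j+M})_{i,j=0}^{N-1}) with D_{K,M}(0) = 1. Then for every positive integer k: D_{2k+1,1-k}((2k+1)·n) = (-1)^{k·n} and D_{2k+1,1-k}((2k+1)·n + k) = (-1)^{k·n + binom(k,2)} for all natural numbers n, and D_{2k+1,1-k}(N) = 0 for every other positive integer N (i.e. all N not of either of these two forms). -/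
/-!
Let `𝒞` be the Catalan series, so that `∑ₙ C_{K,n} xⁿ = 𝒞^K` and `𝒞⁻¹ = 1 - x𝒞`. As `x𝒞` and
`1 - x𝒞` are the two roots of `y² - y + x`, the power sum `(x𝒞)^K + (1 - x𝒞)^K` is a polynomial of
degree at most `K / 2`; hence the coefficients `g_n` of `𝒞^(-K) = (1 - x𝒞)^K` satisfy
`g_n = -C_{K,n-K}` for `n > K / 2`.

Multiplying the Hankel matrix `(C_{K,i+j-c})` of size `c + 1 + N'` on the left by the unit lower
triangular Toeplitz matrix `(g_{i-j})` makes it block upper triangular: the top left block of size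
`c + 1` is the reversed identity, and once `c + 1 ≥ K / 2` the bottom right block is the Hankel
matrix `(C_{K,i+j+c+2-K})` times a unit upper triangular matrix. Thus
`D_{K,-c}(c+1+N') = (-1)^binom(c+1,2) · D_{K,c+2-K}(N')`. For `K = 2k + 1` the steps `c = k - 1`
and `c = k` lead from `M = 1 - k` to `M = -k` and back, so `D_{2k+1,1-k}(N + 2k + 1) =
(-1)^k D_{2k+1,1-k}(N)`; for `0 < N ≤ 2k`, `N ≠ k`, one of the two Hankel matrices has a zero first
row.
-/

/-- The convolution powers of the Catalan numbers:
`C_{K,n} = (K/(n+K))·binom(2n+K-1, n)` for `n ≥ 0`, and `C_{K,n} = 0` for `n < 0`. -/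
noncomputable def Ccat (K : ℕ) (n : ℤ) : ℚ :=
  if 0 ≤ n then ((K : ℚ) / ((n : ℚ) + (K : ℚ))) * ((2 * n.toNat + K - 1).choose n.toNat)
  else 0

/-- The Hankel determinant `D_{K,M}(N) = det((C_{K,i+j+M}))_{i,j=0}^{N-1}`
(equal to `1` for `N = 0`). -/
noncomputable def Dcat (K : ℕ) (M : ℤ) (N : ℕ) : ℚ :=
  Matrix.det (Matrix.of fun i j : Fin N => Ccat K ((i : ℤ) + (j : ℤ) + M))

open PowerSeries Finset Matrix

section Hankel

def hankel {α : Type*} (a : ℤ → α) (M : ℤ) (N : ℕ) : Matrix (Fin N) (Fin N) α :=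
  of fun i j => a (i + j + M)

def lowerToeplitz {α : Type*} [Zero α] (f : ℕ → α) (N : ℕ) : Matrix (Fin N) (Fin N) α :=
  of fun i j => if (j : ℕ) ≤ i then f (i - j) else 0

lemma hankel_transpose {α : Type*} (a : ℤ → α) (M : ℤ) (N : ℕ) :
    (hankel a M N)ᵀ = hankel a M N := by
  ext i j
  simp only [hankel, transpose_apply, of_apply, add_comm (i : ℤ)]

variable {R : Type*} [CommRing R]

lemma det_lowerToeplitz (f : ℕ → R) (N : ℕ) : (lowerToeplitz f N).det = f 0 ^ N := by
  have h : (lowerToeplitz f N).IsLowerTriangular := fun i j (hij : i < j) => by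
    simp [lowerToeplitz, not_le.mpr hij]
  rw [det_of_isLowerTriangular _ h]
  simp [lowerToeplitz]

lemma lowerToeplitz_mul_hankel_apply (f : ℕ → R) (a : ℤ → R) (M : ℤ) {N : ℕ} (i j : Fin N) :
    (lowerToeplitz f N * hankel a M N) i j =
      ∑ t ∈ range (i + 1), f t * a (i + j + M - t) := by
  have hfilter : (range N).filter (· ≤ (i : ℕ)) = range (i + 1) := by
    ext s; simp only [mem_filter, mem_range]; omega
  simp only [mul_apply, lowerToeplitz, hankel, of_apply]
  rw [Fin.sum_univ_eq_sum_range
    (fun s => (if s ≤ (i : ℕ) then f (i - s) else 0) * a (s + j + M))]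
  simp only [ite_mul, zero_mul]
  rw [← sum_filter, hfilter, ← sum_range_reflect]
  refine sum_congr rfl fun s hs => ?_
  have hs : s < i + 1 := mem_range.mp hs
  rw [show (i : ℕ) + 1 - 1 - s = i - s by omega, Nat.sub_sub_self (by omega : s ≤ (i : ℕ))]
  push_cast [Nat.cast_sub (by omega : s ≤ (i : ℕ))]
  ring_nf

lemma det_eq_det_mul_det_of_lower_left_eq_zero {m n : ℕ} (P : Matrix (Fin (m + n)) (Fin (m + n)) R)
    (h : ∀ i j, P (Fin.natAdd m i) (Fin.castAdd n j) = 0) :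
    P.det = (P.submatrix (Fin.castAdd n) (Fin.castAdd n)).det *
      (P.submatrix (Fin.natAdd m) (Fin.natAdd m)).det := by
  rw [← det_submatrix_equiv_self finSumFinEquiv, ← det_fromBlocks_zero₂₁ _
    (P.submatrix (Fin.castAdd n) (Fin.natAdd m))]
  congr 1
  ext (i | i) (j | j) <;> simp [h]

lemma det_antidiagonal (n : ℕ) :
    (of fun i j : Fin n => if (i : ℕ) + j + 1 = n then (1 : R) else 0).det = (-1) ^ n.choose 2 := by
  induction n with
  | zero => simp
  | succ n ih =>
    rw [det_succ_row_zero, sum_eq_single (Fin.last n)]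
    · have hminor : (of fun i j : Fin (n + 1) => if (i : ℕ) + j + 1 = n + 1 then (1 : R) else 0
          ).submatrix Fin.succ (Fin.last n).succAbove =
          of fun i j : Fin n => if (i : ℕ) + j + 1 = n then (1 : R) else 0 := by
        ext i j
        simp only [submatrix_apply, Fin.succAbove_last, of_apply, Fin.val_succ, Fin.val_castSucc]
        congr 1
        simp only [eq_iff_iff]
        omega
      rw [hminor, ih, Nat.choose_succ_succ', Nat.choose_one_right, pow_add]
      simp
    · intro j _ hj
      have hj : (0 : ℕ) + j + 1 ≠ n + 1 := fun h => hj (Fin.ext (by simp; omega))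
      simp only [of_apply, Fin.val_zero, hj, if_false, mul_zero, zero_mul]
    · simp

variable {a : ℤ → R} {g : ℕ → R}

lemma sum_range_mul_eq_ite (ha : ∀ n < 0, a n = 0)
    (hconv : ∀ n : ℕ, ∑ t ∈ range (n + 1), g t * a (n - t) = if n = 0 then 1 else 0)
    {i : ℕ} {n : ℤ} (hn : n ≤ i) :
    ∑ t ∈ range (i + 1), g t * a (n - t) = if n = 0 then 1 else 0 := by
  rcases lt_or_ge n 0 with hneg | hnonneg
  · rw [if_neg hneg.ne]
    exact sum_eq_zero fun t _ => by rw [ha _ (by omega), mul_zero]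
  · lift n to ℕ using hnonneg
    rw [← sum_subset (range_subset_range.mpr (by omega : n + 1 ≤ i + 1)), hconv n]
    · simp
    · intro t _ ht
      rw [ha _ (by simp at ht; omega), mul_zero]

lemma sum_range_mul_eq_sum_tail {d : ℕ} {K : ℤ}
    (hconv : ∀ n : ℕ, ∑ t ∈ range (n + 1), g t * a (n - t) = if n = 0 then 1 else 0)
    (htail : ∀ n : ℕ, d < n → g n = -a (n - K)) {i : ℕ} (hi : d ≤ i) (j : ℕ) :
    ∑ t ∈ range (i + 1), g t * a (i + 1 + j - t) =
      ∑ r ∈ range (j + 1), a r * a (i + 1 + j - K - r) := by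
  have h := hconv (i + 1 + j)
  rw [if_neg (by omega), show i + 1 + j + 1 = (i + 1) + (j + 1) by omega, sum_range_add] at h
  push_cast at h
  rw [eq_neg_of_add_eq_zero_left h, ← sum_neg_distrib]
  conv_rhs => rw [← sum_range_reflect]
  refine sum_congr rfl fun r hr => ?_
  have hr : r < j + 1 := mem_range.mp hr
  rw [htail _ (by omega), Nat.cast_sub (by omega)]
  push_cast
  ring_nf

theorem det_hankel_neg_add (ha : ∀ n < 0, a n = 0) (ha0 : a 0 = 1)
    (hconv : ∀ n : ℕ, ∑ t ∈ range (n + 1), g t * a (n - t) = if n = 0 then 1 else 0)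
    {d : ℕ} {K : ℤ} (htail : ∀ n : ℕ, d < n → g n = -a (n - K)) {c : ℕ} (hc : d ≤ c + 1)
    (N' : ℕ) :
    (hankel a (-c) (c + 1 + N')).det =
      (-1) ^ (c + 1).choose 2 * (hankel a (c + 2 - K) N').det := by
  set P := lowerToeplitz g (c + 1 + N') * hankel a (-c) (c + 1 + N') with hPdef
  have hg0 : g 0 = 1 := by simpa [ha0] using hconv 0
  have hP : ∀ i j, P i j = ∑ t ∈ range (i + 1), g t * a ((i + j - c : ℤ) - t) := fun i j => by
    rw [hPdef, lowerToeplitz_mul_hankel_apply]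
    ring_nf
  have hlower : ∀ i j, P (Fin.natAdd (c + 1) i) (Fin.castAdd N' j) = 0 := fun i j => by
    rw [hP, sum_range_mul_eq_ite ha hconv (by simp; omega), if_neg (by simp; omega)]
  have htop : P.submatrix (Fin.castAdd N') (Fin.castAdd N') =
      of fun i j : Fin (c + 1) => if (i : ℕ) + j + 1 = c + 1 then 1 else 0 := by
    ext i j
    rw [submatrix_apply, hP, sum_range_mul_eq_ite ha hconv (by simp; omega), of_apply]
    congr 1
    simp only [Fin.val_castAdd, eq_iff_iff]
    omega
  have hbottom : P.submatrix (Fin.natAdd (c + 1)) (Fin.natAdd (c + 1)) =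
      hankel a (c + 2 - K) N' * (lowerToeplitz (fun r => a r) N')ᵀ := by
    rw [← hankel_transpose, ← transpose_mul]
    ext i j
    rw [transpose_apply, lowerToeplitz_mul_hankel_apply, submatrix_apply, hP]
    convert sum_range_mul_eq_sum_tail hconv htail (i := c + 1 + i) (by omega) j using 3 <;>
      push_cast [Fin.val_natAdd] <;> ring_nf
  calc (hankel a (-c) (c + 1 + N')).det = P.det := by
        rw [det_mul, det_lowerToeplitz, hg0, one_pow, one_mul]
    _ = _ := by
        rw [det_eq_det_mul_det_of_lower_left_eq_zero P hlower, htop, hbottom, det_antidiagonal,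
          det_mul, det_transpose, det_lowerToeplitz, Nat.cast_zero, ha0, one_pow, mul_one]

lemma det_hankel_eq_zero (ha : ∀ n < 0, a n = 0) {M : ℤ} {N : ℕ} (hN : 0 < N) (hNM : N + M ≤ 0) :
    (hankel a M N).det = 0 :=
  det_eq_zero_of_row_eq_zero ⟨0, hN⟩ fun j => ha _ (by simp; omega)

end Hankel

lemma coeff_pow_add_pow_eq_zero {R : Type*} [CommRing R] {y z : R⟦X⟧} (hsum : y + z = 1)
    (hprod : y * z = X) {m n : ℕ} (h : m < 2 * n) : coeff n (y ^ m + z ^ m) = 0 := by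
  induction m using Nat.twoStepInduction generalizing n with
  | zero => simp [coeff_one, show n ≠ 0 by omega]
  | one => simp [hsum, coeff_one, show n ≠ 0 by omega]
  | more m ih₀ ih₁ =>
    obtain ⟨n, rfl⟩ : ∃ n', n = n' + 1 := ⟨n - 1, by omega⟩
    have hrec : y ^ (m + 2) + z ^ (m + 2) = (y ^ (m + 1) + z ^ (m + 1)) - X * (y ^ m + z ^ m) := by
      linear_combination (y ^ (m + 1) + z ^ (m + 1)) * hsum - (y ^ m + z ^ m) * hprod
    rw [hrec, map_sub, coeff_succ_X_mul, ih₁ (by omega), ih₀ (by omega), sub_zero]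

lemma X_mul_map_catalanSeries_sq (R : Type*) [CommRing R] :
    X * catalanSeries.map (Nat.castRingHom R) ^ 2 = catalanSeries.map (Nat.castRingHom R) - 1 := by
  have h := congrArg (map (Nat.castRingHom R)) catalanSeries_sq_mul_X_add_one
  rw [map_add, map_mul, map_pow, map_X, map_one] at h
  linear_combination h

lemma Ccat_of_neg (K : ℕ) {n : ℤ} (hn : n < 0) : Ccat K n = 0 := by
  simp [Ccat, not_le.mpr hn]

lemma Ccat_zero_left (n : ℤ) : Ccat 0 n = 0 := by
  simp [Ccat]

lemma Ccat_zero_right {K : ℕ} (hK : K ≠ 0) : Ccat K 0 = 1 := by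
  simp [Ccat, hK]

lemma Ccat_natCast (K n : ℕ) :
    Ccat K n = (K : ℚ) / (n + K) * (2 * n + K - 1).choose n := by
  simp [Ccat]

lemma Ccat_one (n : ℕ) : Ccat 1 n = catalan n := by
  have h := succ_mul_catalan_eq_centralBinom n
  rw [Nat.centralBinom_eq_two_mul_choose] at h
  rw [Ccat_natCast, Nat.add_sub_cancel, ← h]
  push_cast
  field_simp

lemma Ccat_add_two (K n : ℕ) : Ccat (K + 2) n = Ccat (K + 1) (n + 1) - Ccat K (n + 1) := by
  have hP := Nat.add_one_mul_choose_eq (2 * n + K + 1) n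
  have hQ := Nat.choose_succ_right_eq (2 * n + K + 1) n
  rw [show 2 * n + K + 1 - n = n + K + 1 by omega] at hQ
  rw [← Nat.cast_inj (R := ℚ)] at hP hQ
  push_cast at hP hQ
  rw [show (n : ℤ) + 1 = (n + 1 : ℕ) by push_cast; ring, Ccat_natCast, Ccat_natCast, Ccat_natCast,
    show 2 * n + (K + 2) - 1 = 2 * n + K + 1 by omega,
    show 2 * (n + 1) + (K + 1) - 1 = 2 * n + K + 1 + 1 by omega,
    show 2 * (n + 1) + K - 1 = 2 * n + K + 1 by omega,
    eq_div_of_mul_eq (by positivity) hP.symm, eq_div_of_mul_eq (by positivity) hQ]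
  push_cast
  field_simp
  ring

local notation "𝒞" => catalanSeries.map (Nat.castRingHom ℚ)

lemma coeff_succ_catalan_pow (K n : ℕ) : coeff (n + 1) (𝒞 ^ K) = Ccat K (n + 1) := by
  induction K using Nat.twoStepInduction generalizing n with
  | zero => simp [coeff_one, Ccat_zero_left]
  | one =>
    rw [pow_one, coeff_map, catalanSeries_coeff, show (n : ℤ) + 1 = (n + 1 : ℕ) by push_cast; ring,
      Ccat_one, eq_natCast]
  | more K ih₀ ih₁ =>
    have hrec : X * 𝒞 ^ (K + 2) = 𝒞 ^ (K + 1) - 𝒞 ^ K := by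
      linear_combination 𝒞 ^ K * X_mul_map_catalanSeries_sq ℚ
    rw [← coeff_succ_X_mul, hrec, map_sub, ih₀, ih₁,
      show (n : ℤ) + 1 = (n + 1 : ℕ) by push_cast; ring, Ccat_add_two]

lemma coeff_catalan_pow {K : ℕ} (hK : K ≠ 0) (n : ℕ) : coeff n (𝒞 ^ K) = Ccat K n := by
  cases n with
  | zero =>
    rw [Nat.cast_zero, Ccat_zero_right hK, ← map_pow, coeff_map, coeff_zero_eq_constantCoeff_apply,
      map_pow, catalanSeries_constantCoeff, one_pow, map_one]
  | succ n => exact_mod_cast coeff_succ_catalan_pow K n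

lemma sum_coeff_mul_Ccat {K : ℕ} (hK : K ≠ 0) (n : ℕ) :
    ∑ t ∈ range (n + 1), coeff t ((1 - X * 𝒞) ^ K) * Ccat K (n - t) = if n = 0 then 1 else 0 := by
  have h : (1 - X * 𝒞) ^ K * 𝒞 ^ K = 1 := by
    rw [← mul_pow, show (1 - X * 𝒞) * 𝒞 = 1 by linear_combination -X_mul_map_catalanSeries_sq ℚ,
      one_pow]
  have hn := congrArg (coeff n) h
  rw [coeff_one, coeff_mul, Nat.sum_antidiagonal_eq_sum_range_succ
    (fun i j => coeff i ((1 - X * 𝒞) ^ K) * coeff j (𝒞 ^ K))] at hn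
  rw [← hn]
  refine sum_congr rfl fun t ht => ?_
  rw [coeff_catalan_pow hK, Nat.cast_sub (by simp at ht; omega)]

lemma coeff_one_sub_X_mul_catalan_pow {K : ℕ} (hK : K ≠ 0) {n : ℕ} (hn : K < 2 * n) :
    coeff n ((1 - X * 𝒞) ^ K) = -Ccat K (n - K) := by
  have h := coeff_pow_add_pow_eq_zero (y := X * 𝒞) (z := 1 - X * 𝒞) (by ring)
    (by linear_combination -X * X_mul_map_catalanSeries_sq ℚ) hn
  rw [map_add, mul_pow, coeff_X_pow_mul'] at h
  split_ifs at h with hKn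
  · rw [coeff_catalan_pow hK, Nat.cast_sub hKn] at h
    linear_combination h
  · rw [Ccat_of_neg _ (by omega)]
    linear_combination h

theorem Dcat_neg_add {K : ℕ} (hK : K ≠ 0) {c : ℕ} (hc : K / 2 ≤ c + 1) (N' : ℕ) :
    Dcat K (-c) (c + 1 + N') = (-1) ^ (c + 1).choose 2 * Dcat K (c + 2 - K) N' :=
  det_hankel_neg_add (fun _ => Ccat_of_neg K) (Ccat_zero_right hK) (sum_coeff_mul_Ccat hK)
    (fun _ hn => coeff_one_sub_X_mul_catalan_pow hK (by omega)) hc N'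

lemma Dcat_eq_zero_of_add_nonpos {K : ℕ} {M : ℤ} {N : ℕ} (hN : 0 < N) (hNM : N + M ≤ 0) :
    Dcat K M N = 0 :=
  det_hankel_eq_zero (fun _ => Ccat_of_neg K) hN hNM

section OddIndex

variable {k : ℕ}

lemma Dcat_one_sub_add (hk : 0 < k) (N' : ℕ) :
    Dcat (2 * k + 1) (1 - k) (k + N') = (-1) ^ k.choose 2 * Dcat (2 * k + 1) (-k) N' := by
  obtain ⟨j, rfl⟩ : ∃ j, k = j + 1 := ⟨k - 1, by omega⟩
  convert Dcat_neg_add (K := 2 * (j + 1) + 1) (c := j) (by omega) (by omega) N' using 3 <;>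
    push_cast <;> ring

lemma Dcat_neg_add_succ (N' : ℕ) :
    Dcat (2 * k + 1) (-k) (k + 1 + N') =
      (-1) ^ (k + 1).choose 2 * Dcat (2 * k + 1) (1 - k) N' := by
  convert Dcat_neg_add (K := 2 * k + 1) (c := k) (by omega) (by omega) N' using 3
  push_cast
  ring

lemma Dcat_one_sub_add_period (hk : 0 < k) (N : ℕ) :
    Dcat (2 * k + 1) (1 - k) (N + (2 * k + 1)) = (-1) ^ k * Dcat (2 * k + 1) (1 - k) N := by
  rw [show N + (2 * k + 1) = k + (k + 1 + N) by ring, Dcat_one_sub_add hk, Dcat_neg_add_succ,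
    ← mul_assoc, ← pow_add, Nat.choose_succ_succ', Nat.choose_one_right,
    show k.choose 2 + (k + k.choose 2) = 2 * k.choose 2 + k by ring, pow_add, pow_mul, neg_one_sq,
    one_pow, one_mul]

lemma Dcat_one_sub_mul_add (hk : 0 < k) (q r : ℕ) :
    Dcat (2 * k + 1) (1 - k) ((2 * k + 1) * q + r) =
      (-1) ^ (k * q) * Dcat (2 * k + 1) (1 - k) r := by
  induction q with
  | zero => simp
  | succ q ih =>
    rw [show (2 * k + 1) * (q + 1) + r = (2 * k + 1) * q + r + (2 * k + 1) by ring,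
      Dcat_one_sub_add_period hk, ih, ← mul_assoc, ← pow_add, mul_add_one, add_comm k]

lemma Dcat_one_sub_self (hk : 0 < k) : Dcat (2 * k + 1) (1 - k) k = (-1) ^ k.choose 2 := by
  simpa [Dcat] using Dcat_one_sub_add hk 0

lemma Dcat_one_sub_eq_zero (hk : 0 < k) {r : ℕ} (hr₀ : 0 < r) (hr : r < 2 * k + 1) (hrk : r ≠ k) :
    Dcat (2 * k + 1) (1 - k) r = 0 := by
  rcases lt_or_gt_of_ne hrk with hlt | hgt
  · exact Dcat_eq_zero_of_add_nonpos hr₀ (by omega)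
  · obtain ⟨N', rfl⟩ : ∃ N', r = k + N' := ⟨r - k, by omega⟩
    rw [Dcat_one_sub_add hk, Dcat_eq_zero_of_add_nonpos (by omega) (by omega), mul_zero]

end OddIndex

/-- `D_{2k+1,1-k}((2k+1)n) = (-1)^{kn}`, `D_{2k+1,1-k}((2k+1)n+k) = (-1)^{kn+binom(k,2)}`,
and `D_{2k+1,1-k}(N) = 0` for all other positive `N`. -/
theorem stmt10 (k : ℕ) (hk : 0 < k) :
    (∀ n : ℕ, Dcat (2 * k + 1) (1 - (k : ℤ)) ((2 * k + 1) * n) = (-1 : ℚ) ^ (k * n)) ∧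
      (∀ n : ℕ, Dcat (2 * k + 1) (1 - (k : ℤ)) ((2 * k + 1) * n + k) =
          (-1 : ℚ) ^ (k * n + k.choose 2)) ∧
      (∀ N : ℕ, 0 < N → (¬ ∃ n : ℕ, N = (2 * k + 1) * n) →
        (¬ ∃ n : ℕ, N = (2 * k + 1) * n + k) →
        Dcat (2 * k + 1) (1 - (k : ℤ)) N = 0) := by
  refine ⟨fun n => ?_, fun n => ?_, fun N hN hN₀ hNk => ?_⟩
  · simpa [Dcat] using Dcat_one_sub_mul_add hk n 0
  · rw [Dcat_one_sub_mul_add hk, Dcat_one_sub_self hk, pow_add]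
  · have hdiv := Nat.div_add_mod N (2 * k + 1)
    rw [← hdiv, Dcat_one_sub_mul_add hk]
    refine mul_eq_zero_of_right _ (Dcat_one_sub_eq_zero hk ?_ (Nat.mod_lt _ (by omega)) ?_)
    · exact Nat.pos_of_ne_zero fun h => hN₀ ⟨N / (2 * k + 1), by omega⟩
    · exact fun h => hNk ⟨N / (2 * k + 1), by omega⟩
end

section
/- Let C_n(t) be the Narayana polynomials (C_0(t) = 1, C_n(t) = Σ_{k=0}^{n-1} (1/(k+1))·binom(n,k)·binom(n-1,k)·t^k for n > 0), with generating functions c_0(x,t) = Σ_{n≥0} C_n(t)·x^n and c_1(x,t) = 1 + t·Σ_{n≥1} C_n(t)·x^n over ℚ[t], and define C_{2,n}(t) as the coefficient of x^n in c_0(x,t)·c_1(x,t). Then for every natural number n, C_{2,n}(t) = C_{n+1}(t). -/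
/-- The Narayana polynomials: `C₀(t) = 1` and
`Cₙ(t) = Σ_{k=0}^{n-1} (1/(k+1))·binom(n,k)·binom(n-1,k)·t^k` for `n > 0`. -/
noncomputable def narayana (n : ℕ) : Polynomial ℚ :=
  if n = 0 then 1
  else ∑ k ∈ Finset.range n,
    Polynomial.C ((1 / (k + 1 : ℚ)) * (n.choose k) * ((n - 1).choose k)) * Polynomial.X ^ k

/-- The generating function `c₀(x,t) = Σ_{n≥0} Cₙ(t)·xⁿ` of the Narayana polynomials,
a formal power series in `x` over `ℚ[t]`. -/
noncomputable def narGF0 : PowerSeries (Polynomial ℚ) := PowerSeries.mk narayana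

/-- The generating function `c₁(x,t) = 1 + t·Σ_{n≥1} Cₙ(t)·xⁿ`,
a formal power series in `x` over `ℚ[t]`. -/
noncomputable def narGF1 : PowerSeries (Polynomial ℚ) :=
  PowerSeries.mk fun n => if n = 0 then 1 else Polynomial.X * narayana n

/-!
The three-term recurrence `(n+3) C_{n+2} = (2n+3)(1+t) C_{n+1} - n(1-t)² C_n`, checked on
coefficients through `n · [t^k] C_n = binom(n,k) binom(n,k+1)`, turns into a first-order linear
differential equation for `F = c₀`. With `s = 1 - t` it makes
`Q = t x F² + (s x - 1) F + 1` satisfy `x (1 - 2(1+t)x + s²x²) Q' = (s²x² - 1) Q`; comparing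
lowest-order terms, such an equation forces `Q = 0`. Since `c₁ = s + t F`, the relation `Q = 0`
reads `c₀ = 1 + x c₀ c₁`, and the theorem is its coefficient of `x^{n+1}`.
-/

open scoped Polynomial

section NarayanaRecurrence

open Polynomial

theorem Nat.cast_choose_succ_mul {R : Type*} [CommRing R] (n k : ℕ) :
    (n.choose (k + 1) : R) * (k + 1) = n.choose k * (n - k) := by
  rcases le_or_gt k n with hk | hk
  · have h := congrArg (Nat.cast : ℕ → R) (Nat.choose_succ_right_eq n k)
    push_cast [Nat.cast_sub hk] at h
    exact h
  · simp [Nat.choose_eq_zero_of_lt hk, Nat.choose_eq_zero_of_lt (Nat.lt_succ_of_lt hk)]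

theorem natCast_mul_coeff_narayana (n k : ℕ) :
    (n : ℚ) * (narayana n).coeff k = n.choose k * n.choose (k + 1) := by
  rcases n with _ | m
  · simp
  have hsucc : ((m + 1 : ℕ) : ℚ) * m.choose k = (m + 1).choose (k + 1) * (k + 1) := by
    exact_mod_cast Nat.add_one_mul_choose_eq m k
  simp only [narayana, Nat.add_one_ne_zero, if_false, finsetSum_coeff, coeff_C_mul_X_pow,
    Finset.sum_ite_eq, Finset.mem_range, add_tsub_cancel_right]
  split_ifs with hk
  · field_simp
    linear_combination ((m + 1).choose k : ℚ) * hsucc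
  · rw [Nat.choose_eq_zero_of_lt (by omega : m + 1 < k + 1)]
    simp

theorem choose_mul_choose_recurrence (n k : ℕ) :
    ((n : ℚ) + 1) * (n + 3) * ((n + 2).choose (k + 2) * (n + 2).choose (k + 3)) =
      (2 * n + 3) * (n + 2) * ((n + 1).choose (k + 2) * (n + 1).choose (k + 3) +
        (n + 1).choose (k + 1) * (n + 1).choose (k + 2)) -
      (n + 1) * (n + 2) * (n.choose (k + 2) * n.choose (k + 3) -
        2 * (n.choose (k + 1) * n.choose (k + 2)) + n.choose k * n.choose (k + 1)) := by
  simp only [Nat.choose_succ_succ', Nat.cast_add]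
  have h1 := Nat.cast_choose_succ_mul (R := ℚ) n k
  have h2 := Nat.cast_choose_succ_mul (R := ℚ) n (k + 1)
  have h3 := Nat.cast_choose_succ_mul (R := ℚ) n (k + 2)
  push_cast at h1 h2 h3
  rw [← eq_div_iff (by positivity)] at h1 h2 h3
  rw [h3, h2, h1]
  field_simp
  ring

theorem narayana_recurrence (n : ℕ) :
    ((n : ℚ[X]) + 3) * narayana (n + 2) =
      (2 * (n : ℚ[X]) + 3) * (1 + X) * narayana (n + 1) -
        (n : ℚ[X]) * (1 - X) ^ 2 * narayana n := by
  ext k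
  refine mul_left_cancel₀ (by positivity : ((n : ℚ) + 1) * (n + 2) ≠ 0) ?_
  simp only [sq, add_mul, mul_add, sub_mul, mul_sub, mul_assoc, one_mul, mul_one, coeff_add,
    coeff_sub, coeff_natCast_mul, coeff_ofNat_mul]
  have e0 := natCast_mul_coeff_narayana n
  have e1 := natCast_mul_coeff_narayana (n + 1)
  have e2 := natCast_mul_coeff_narayana (n + 2)
  push_cast at e1 e2
  rcases k with _ | _ | k
  · simp only [coeff_X_mul_zero]
    linear_combination (norm := skip) (n + 1) * (n + 3) * e2 0 - (2 * n + 3) * (n + 2) * e1 0 +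
      (n + 1) * (n + 2) * e0 0
    simp only [Nat.choose_zero_right, Nat.choose_one_right, Nat.cast_add, Nat.cast_one,
      Nat.cast_ofNat, zero_add, one_mul, mul_zero, add_zero, sub_zero]
    ring
  · simp only [coeff_X_mul, coeff_X_mul_zero]
    linear_combination (norm := skip) (n + 1) * (n + 3) * e2 1 -
      (2 * n + 3) * (n + 2) * (e1 1 + e1 0) + (n + 1) * (n + 2) * (e0 1 - 2 * e0 0)
    simp only [Nat.choose_zero_right, Nat.choose_one_right, Nat.cast_choose_two, Nat.cast_add,
      Nat.cast_one, Nat.cast_ofNat, Nat.reduceAdd, zero_add, one_mul, mul_zero, add_zero,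
      add_sub_cancel_right]
    ring
  · simp only [coeff_X_mul]
    linear_combination (n + 1) * (n + 3) * e2 (k + 2) -
      (2 * n + 3) * (n + 2) * (e1 (k + 2) + e1 (k + 1)) +
      (n + 1) * (n + 2) * (e0 (k + 2) - 2 * e0 (k + 1) + e0 k) + choose_mul_choose_recurrence n k

end NarayanaRecurrence

namespace PowerSeries

theorem coeff_X_mul_derivative {R : Type*} [CommSemiring R] (f : R⟦X⟧) (n : ℕ) :
    coeff n (X * d⁄dX R f) = n * coeff n f := by
  rcases n with _ | n
  · simp
  · rw [coeff_succ_X_mul, coeff_derivative, mul_comm]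
    push_cast
    ring

variable {R : Type*} [CommRing R]

theorem X_mul_derivative_X_pow_mul (d : ℕ) (g : R⟦X⟧) :
    X * d⁄dX R (X ^ d * g) = X ^ d * ((d : R⟦X⟧) * g + X * d⁄dX R g) := by
  rcases d with _ | d
  · simp
  · simp only [Derivation.leibniz, Derivation.leibniz_pow, derivative_X, smul_eq_mul,
      nsmul_eq_mul, add_tsub_cancel_right]
    push_cast
    ring

theorem eq_zero_of_X_mul_mul_derivative_add_mul_eq_zero [IsDomain R] {f A B : R⟦X⟧}
    (hAB : ∀ d : ℕ, (d : R) * constantCoeff A + constantCoeff B ≠ 0)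
    (h : X * A * d⁄dX R f + B * f = 0) : f = 0 := by
  by_contra hf
  set d := f.order.toNat
  set g := divXPowOrder f
  have hg : constantCoeff g ≠ 0 := constantCoeff_divXPowOrder_eq_zero_iff.not.mpr hf
  rw [← X_pow_order_mul_divXPowOrder (f := f)] at h
  have hfactor : X ^ d * (A * ((d : R⟦X⟧) * g + X * d⁄dX R g) + B * g) = 0 := by
    rw [← h, mul_right_comm X A, X_mul_derivative_X_pow_mul]
    ring
  have h0 := congrArg constantCoeff
    ((mul_eq_zero.mp hfactor).resolve_left (pow_ne_zero _ X_ne_zero))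
  simp only [map_add, map_mul, map_natCast, constantCoeff_X, zero_mul, add_zero, map_zero] at h0
  exact mul_ne_zero (hAB d) hg (by linear_combination h0)

end PowerSeries

section GeneratingFunction

open PowerSeries

theorem narGF0_ode :
    narGF0 + X * d⁄dX ℚ[X] narGF0 +
        C ((1 - Polynomial.X) ^ 2) * (X ^ 2 * (X * d⁄dX ℚ[X] narGF0)) =
      C (1 + Polynomial.X) * (X * narGF0) +
        C (2 + 2 * Polynomial.X) * (X * (X * d⁄dX ℚ[X] narGF0)) + 1 + C (1 - Polynomial.X) * X := by
  refine PowerSeries.ext fun n => ?_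
  simp only [narGF0, LinearMap.map_add, coeff_C_mul, coeff_X_pow_mul', coeff_X_mul_derivative,
    coeff_one, coeff_X, coeff_mk]
  rcases n with _ | _ | n
  · simp [narayana]
  · simp [narayana]
  · simp only [Nat.cast_add, Nat.cast_one, le_add_iff_nonneg_left, zero_le, ↓reduceIte,
      Nat.reduceSubDiff, coeff_succ_X_mul, coeff_mk, coeff_derivative, Nat.add_eq_zero_iff,
      one_ne_zero, and_false, and_self, add_zero, Nat.add_eq_right, mul_zero]
    linear_combination narayana_recurrence n

theorem narGF1_eq : narGF1 = C (1 - Polynomial.X) + C Polynomial.X * narGF0 := by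
  refine PowerSeries.ext fun n => ?_
  rcases n with _ | n <;> simp [narGF1, narGF0, narayana]

theorem narGF0_quadratic_eq_zero :
    C Polynomial.X * X * narGF0 ^ 2 + (C (1 - Polynomial.X) * X - 1) * narGF0 + 1 = 0 := by
  have ode := narGF0_ode
  simp only [map_add, map_sub, map_pow, map_one, map_mul, map_ofNat] at ode ⊢
  set t : ℚ[X]⟦X⟧ := C Polynomial.X
  set F := narGF0
  have hdt : d⁄dX ℚ[X] t = 0 := derivative_C
  refine eq_zero_of_X_mul_mul_derivative_add_mul_eq_zero
    (A := 1 - 2 * (1 + t) * X + (1 - t) ^ 2 * X ^ 2) (B := 1 - (1 - t) ^ 2 * X ^ 2)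
    (fun d => by simpa using Nat.cast_add_one_ne_zero d) ?_
  simp only [map_add, map_sub, Derivation.map_one_eq_zero, hdt, Derivation.leibniz,
    Derivation.leibniz_pow, derivative_X, smul_eq_mul, nsmul_eq_mul]
  linear_combination (2 * t * X * F + (1 - t) * X - 1) * ode

theorem narGF0_eq_one_add_X_mul : narGF0 = 1 + X * (narGF0 * narGF1) := by
  rw [narGF1_eq]
  linear_combination (-1 : ℚ[X]⟦X⟧) * narGF0_quadratic_eq_zero

end GeneratingFunction

/-- `C_{2,n}(t) = C_{n+1}(t)`: the coefficient of `xⁿ` in `c₀(x,t)·c₁(x,t)` is the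
`(n+1)`-st Narayana polynomial. -/
theorem stmt13 (n : ℕ) :
    PowerSeries.coeff n (narGF0 * narGF1) = narayana (n + 1) := by
  calc PowerSeries.coeff n (narGF0 * narGF1)
      = PowerSeries.coeff (n + 1) (1 + PowerSeries.X * (narGF0 * narGF1)) := by simp
    _ = narayana (n + 1) := by rw [← narGF0_eq_one_add_X_mul, narGF0, PowerSeries.coeff_mk]
end
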